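/- arXiv:1908.07684 — 5 statements merged into one kernel-verified Lean document; each statement's English description precedes it below -/
import Mathlib

section
/- Let R_P be an m×m real symmetric positive semidefinite matrix and Z an n×n real symmetric positive semidefinite matrix, and let B, D be n×m real matrices. If Ker(R_P) ⊆ Ker(B) ∩ Ker(D), then for any n×n matrices C and any n×m matrix L_P with Ker(R_P) ⊆ Ker(L_P'), the matrix (B'Z + D'Z C + L_P')' multiplied by (I - (R_P + D'Z D)(R_P + D'Z D)†) equals zero. -/
/-
Write `M = R_P + D'ZD` and `P = I - MM†`. Since `R_P` and `D'ZD` are positive semidefinite,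
`Ker M ⊆ Ker R_P`, hence `Ker M` lies in the kernels of `B`, `D`, `L_P` and so of
`X' = Z'B + C'Z'D + L_P`, where `X = B'Z + D'ZC + L_P'`. As `MM†` is symmetric, `P = P'`, and `MP' = (PM)' = (M - MM†M)' = 0`:
the columns of `P` lie in `Ker M ⊆ Ker X'`, so `X'P = 0`.
-/

open Matrix

/-- `B` is the Moore–Penrose pseudoinverse of `A`. -/
def IsMoorePenrose {k l : ℕ} (A : Matrix (Fin k) (Fin l) ℝ)
    (B : Matrix (Fin l) (Fin k) ℝ) : Prop :=
  A * B * A = A ∧ B * A * B = B ∧ (A * B)ᵀ = A * B ∧ (B * A)ᵀ = B * A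

open scoped ComplexOrder in
theorem Matrix.PosSemidef.mulVec_eq_zero_of_add {𝕜 n : Type*} [RCLike 𝕜] [Fintype n]
    {A B : Matrix n n 𝕜} (hA : A.PosSemidef) (hB : B.PosSemidef) {x : n → 𝕜}
    (h : (A + B) *ᵥ x = 0) : A *ᵥ x = 0 := by
  have hsum : star x ⬝ᵥ A *ᵥ x + star x ⬝ᵥ B *ᵥ x = 0 := by
    rw [← dotProduct_add, ← add_mulVec, h, dotProduct_zero]
  exact (hA.dotProduct_mulVec_zero_iff x).mp <|
    ((add_eq_zero_iff_of_nonneg (hA.dotProduct_mulVec_nonneg x)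
      (hB.dotProduct_mulVec_nonneg x)).mp hsum).1

theorem Matrix.mul_eq_zero_of_ker_le {R l m n p : Type*} [CommSemiring R] [Fintype m]
    [Fintype p] {A : Matrix l m R} {M : Matrix n m R} {N : Matrix m p R}
    (hker : ∀ v, M *ᵥ v = 0 → A *ᵥ v = 0) (hMN : M * N = 0) : A * N = 0 := by
  refine ext_iff_mulVec.mpr fun v => ?_
  rw [← mulVec_mulVec, zero_mulVec]
  exact hker _ (by rw [mulVec_mulVec, hMN, zero_mulVec])

theorem IsMoorePenrose.mul_one_sub_mul_transpose_eq_zero {k : ℕ}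
    {M W : Matrix (Fin k) (Fin k) ℝ} (hM : M.IsSymm) (hW : IsMoorePenrose M W) :
    M * (1 - M * W)ᵀ = 0 := by
  calc M * (1 - M * W)ᵀ = ((1 - M * W) * M)ᵀ := by rw [transpose_mul, hM.eq]
    _ = 0 := by rw [sub_mul, one_mul, hW.1, sub_self, transpose_zero]

theorem IsMoorePenrose.transpose_one_sub_mul {k : ℕ} {M W : Matrix (Fin k) (Fin k) ℝ}
    (hW : IsMoorePenrose M W) : (1 - M * W)ᵀ = 1 - M * W := by
  rw [transpose_sub, transpose_one, hW.2.2.1]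

theorem stmt2 {n m : ℕ} (RP : Matrix (Fin m) (Fin m) ℝ) (Z : Matrix (Fin n) (Fin n) ℝ)
    (B D : Matrix (Fin n) (Fin m) ℝ) (C : Matrix (Fin n) (Fin n) ℝ)
    (LP : Matrix (Fin n) (Fin m) ℝ)
    (hRP : RP.PosSemidef) (hZ : Z.PosSemidef)
    (hkerB : ∀ v : Fin m → ℝ, RP.mulVec v = 0 → B.mulVec v = 0)
    (hkerD : ∀ v : Fin m → ℝ, RP.mulVec v = 0 → D.mulVec v = 0)
    (hkerL : ∀ v : Fin m → ℝ, RP.mulVec v = 0 → LP.mulVec v = 0)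
    (W : Matrix (Fin m) (Fin m) ℝ)
    (hW : IsMoorePenrose (RP + Dᵀ * Z * D) W) :
    (Bᵀ * Z + Dᵀ * Z * C + LPᵀ)ᵀ * (1 - (RP + Dᵀ * Z * D) * W) = 0 := by
  have hDZD : (Dᵀ * Z * D).PosSemidef := by
    simpa using hZ.conjTranspose_mul_mul_same D
  have hsymm : (RP + Dᵀ * Z * D).IsSymm := by
    simpa using (hRP.add hDZD).isHermitian
  rw [← hW.transpose_one_sub_mul]
  refine mul_eq_zero_of_ker_le (fun v hv => ?_) (hW.mul_one_sub_mul_transpose_eq_zero hsymm)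
  have hRPv : RP *ᵥ v = 0 := hRP.mulVec_eq_zero_of_add hDZD hv
  simp only [transpose_add, transpose_mul, transpose_transpose, add_mulVec, ← mulVec_mulVec,
    hkerB v hRPv, hkerD v hRPv, hkerL v hRPv, mulVec_zero, add_zero]
end

section
/- Let Q, R symmetric, L a matrix, with the block matrix [[Q, L],[L', R]] positive semidefinite, and suppose K satisfies L(I - R R†) = 0. Then the matrix Q + L K + K' L' + K' R K is positive semidefinite; in fact Q + L K + K' L' + K' R K ≥ (L' + R K)' R† (L' + R K) ≥ 0. -/
/-!
Write `S` for the pseudoinverse of `R`; it is symmetric because `R` is, and `S = S R S` makes it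
positive semidefinite. Conjugating the block matrix by `[1; -S Lᵀ]` shows that the generalized
Schur complement `Q - L S Lᵀ` is positive semidefinite. The range condition `L (1 - R S) = 0`
completes the square:
`Q + L K + Kᵀ Lᵀ + Kᵀ R K = (Q - L S Lᵀ) + (Lᵀ + R K)ᵀ S (Lᵀ + R K)`.
-/

open Matrix

namespace IsMoorePenrose

variable {k l : ℕ} {A : Matrix (Fin k) (Fin l) ℝ} {B C : Matrix (Fin l) (Fin k) ℝ}

theorem unique (hB : IsMoorePenrose A B) (hC : IsMoorePenrose A C) : B = C := by
  obtain ⟨hB1, hB2, hB3, hB4⟩ := hB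
  obtain ⟨hC1, hC2, hC3, hC4⟩ := hC
  have hB_eq : B = B * A * C :=
    calc B = B * (A * B)ᵀ := by rw [hB3, ← Matrix.mul_assoc, hB2]
    _ = B * (A * C * A * B)ᵀ := by rw [hC1]
    _ = B * ((A * B)ᵀ * (A * C)ᵀ) := by rw [← transpose_mul, ← Matrix.mul_assoc]
    _ = B * (A * B) * (A * C) := by rw [hB3, hC3, ← Matrix.mul_assoc]
    _ = B * A * C := by rw [← Matrix.mul_assoc B A B, hB2, Matrix.mul_assoc]
  have hC_eq : C = B * A * C :=
    calc C = (C * A)ᵀ * C := by rw [hC4, hC2]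
    _ = (C * (A * B * A))ᵀ * C := by rw [hB1]
    _ = ((B * A)ᵀ * (C * A)ᵀ) * C := by
      rw [← transpose_mul, Matrix.mul_assoc A B A, ← Matrix.mul_assoc]
    _ = B * A * C := by rw [hB4, hC4, Matrix.mul_assoc, hC2]
  rw [hB_eq, ← hC_eq]

theorem transpose (h : IsMoorePenrose A B) : IsMoorePenrose Aᵀ Bᵀ := by
  obtain ⟨h1, h2, h3, h4⟩ := h
  refine ⟨?_, ?_, ?_, ?_⟩
  · rw [← transpose_mul, ← transpose_mul, ← Matrix.mul_assoc, h1]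
  · rw [← transpose_mul, ← transpose_mul, ← Matrix.mul_assoc, h2]
  · rw [← transpose_mul, h4]; exact h4
  · rw [← transpose_mul, h3]; exact h3

theorem isSymm {A B : Matrix (Fin k) (Fin k) ℝ} (hA : A.IsSymm) (h : IsMoorePenrose A B) :
    B.IsSymm := by
  have hT := h.transpose
  rw [hA.eq] at hT
  exact hT.unique h

theorem mul_comm_of_isSymm {A B : Matrix (Fin k) (Fin k) ℝ} (hA : A.IsSymm)
    (h : IsMoorePenrose A B) : B * A = A * B := by
  rw [← h.2.2.2, transpose_mul, hA.eq, (h.isSymm hA).eq]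

end IsMoorePenrose

namespace Matrix

variable {n m : Type*} [Fintype m]

theorem PosSemidef.of_mul_mul_self_eq {R S : Matrix m m ℝ} (hR : R.PosSemidef) (hS : S.IsSymm)
    (hSRS : S * R * S = S) : S.PosSemidef := by
  have h := hR.conjTranspose_mul_mul_same S
  rwa [conjTranspose_eq_transpose_of_trivial, hS.eq, hSRS] at h

theorem PosSemidef.sub_mul_mul_transpose_of_fromBlocks [Fintype n] [DecidableEq n]
    {Q : Matrix n n ℝ} {L : Matrix n m ℝ} {R S : Matrix m m ℝ}
    (hM : (fromBlocks Q L Lᵀ R).PosSemidef) (hS : S.IsSymm) (hSRS : S * R * S = S) :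
    (Q - L * S * Lᵀ).PosSemidef := by
  set X : Matrix (n ⊕ m) n ℝ := fromRows 1 (-(S * Lᵀ))
  have hconj : Xᴴ * fromBlocks Q L Lᵀ R * X = Q - L * S * Lᵀ := by
    rw [conjTranspose_fromRows_eq_fromCols_conjTranspose, Matrix.mul_assoc,
      fromBlocks_mul_fromRows, fromCols_mul_fromRows]
    simp only [conjTranspose_eq_transpose_of_trivial, transpose_neg, transpose_mul,
      transpose_transpose, transpose_one, Matrix.one_mul, Matrix.mul_one, Matrix.mul_neg,
      Matrix.neg_mul, neg_neg, Matrix.mul_add, hS.eq]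
    simp only [Matrix.mul_assoc]
    rw [← Matrix.mul_assoc S R, ← Matrix.mul_assoc (S * R), hSRS]
    abel
  exact hconj ▸ hM.conjTranspose_mul_mul_same X

theorem transpose_add_mul_mul_add_mul {L : Matrix n m ℝ} {R S : Matrix m m ℝ}
    (K : Matrix m n ℝ) (hR : R.IsSymm) (hS : S.IsSymm) (hRSR : R * S * R = R)
    (hLSR : L * S * R = L) :
    (Lᵀ + R * K)ᵀ * S * (Lᵀ + R * K) = L * S * Lᵀ + L * K + Kᵀ * Lᵀ + Kᵀ * R * K := by
  have hRSL : R * S * Lᵀ = Lᵀ := by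
    rw [← hR.eq, ← hS.eq, ← transpose_mul, ← transpose_mul, ← Matrix.mul_assoc, hLSR]
  rw [transpose_add, transpose_transpose, transpose_mul, hR.eq, Matrix.add_mul, Matrix.add_mul,
    Matrix.mul_add, Matrix.mul_add, ← Matrix.mul_assoc, hLSR, Matrix.mul_assoc Kᵀ R S,
    Matrix.mul_assoc Kᵀ, hRSL, ← Matrix.mul_assoc (Kᵀ * (R * S)), Matrix.mul_assoc Kᵀ, hRSR]
  abel

end Matrix

theorem stmt4_general {n m : ℕ} (Q : Matrix (Fin n) (Fin n) ℝ) (R : Matrix (Fin m) (Fin m) ℝ)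
    (L : Matrix (Fin n) (Fin m) ℝ) (K : Matrix (Fin m) (Fin n) ℝ)
    (Rd : Matrix (Fin m) (Fin m) ℝ)
    (hRd : IsMoorePenrose R Rd)
    (hblk : (Matrix.fromBlocks Q L Lᵀ R).PosSemidef)
    (hreg : L * (1 - R * Rd) = 0) :
    (Q + L * K + Kᵀ * Lᵀ + Kᵀ * R * K).PosSemidef ∧
    (Q + L * K + Kᵀ * Lᵀ + Kᵀ * R * K
      - (Lᵀ + R * K)ᵀ * Rd * (Lᵀ + R * K)).PosSemidef ∧
    ((Lᵀ + R * K)ᵀ * Rd * (Lᵀ + R * K)).PosSemidef := by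
  have hRpsd : R.PosSemidef := hblk.submatrix Sum.inr
  have hR : R.IsSymm := isHermitian_iff_isSymm.mp hRpsd.isHermitian
  have hRd_symm := hRd.isSymm hR
  have hLRdR : L * Rd * R = L := by
    rw [Matrix.mul_sub, Matrix.mul_one, sub_eq_zero] at hreg
    rw [Matrix.mul_assoc, hRd.mul_comm_of_isSymm hR, ← hreg]
  have hsq : ((Lᵀ + R * K)ᵀ * Rd * (Lᵀ + R * K)).PosSemidef := by
    have h := (hRpsd.of_mul_mul_self_eq hRd_symm hRd.2.1).conjTranspose_mul_mul_same (Lᵀ + R * K)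
    rwa [conjTranspose_eq_transpose_of_trivial] at h
  have hschur : (Q + L * K + Kᵀ * Lᵀ + Kᵀ * R * K
      - (Lᵀ + R * K)ᵀ * Rd * (Lᵀ + R * K)).PosSemidef := by
    rw [transpose_add_mul_mul_add_mul K hR hRd_symm hRd.1 hLRdR, add_sub_add_right_eq_sub,
      add_sub_add_right_eq_sub, add_sub_add_right_eq_sub]
    exact hblk.sub_mul_mul_transpose_of_fromBlocks hRd_symm hRd.2.1
  exact ⟨by simpa only [sub_add_cancel] using hschur.add hsq, hschur, hsq⟩

theorem stmt4 {n m : ℕ} (Q : Matrix (Fin n) (Fin n) ℝ) (R : Matrix (Fin m) (Fin m) ℝ)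
    (L : Matrix (Fin n) (Fin m) ℝ) (K : Matrix (Fin m) (Fin n) ℝ)
    (Rd : Matrix (Fin m) (Fin m) ℝ)
    (hQ : Q.IsSymm) (hR : R.IsSymm) (hRd : IsMoorePenrose R Rd)
    (hblk : (Matrix.fromBlocks Q L Lᵀ R).PosSemidef)
    (hreg : L * (1 - R * Rd) = 0) :
    (Q + L * K + Kᵀ * Lᵀ + Kᵀ * R * K).PosSemidef ∧
    (Q + L * K + Kᵀ * Lᵀ + Kᵀ * R * K
      - (Lᵀ + R * K)ᵀ * Rd * (Lᵀ + R * K)).PosSemidef ∧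
    ((Lᵀ + R * K)ᵀ * Rd * (Lᵀ + R * K)).PosSemidef :=
  stmt4_general Q R L K Rd hRd hblk hreg
end

section
/- Suppose Z is a symmetric positive semidefinite n×n matrix satisfying the Lyapunov-type equation Ā' Z + Z Ā + C̄' Z C̄ + Q̄ = 0 with Q̄ positive semidefinite. Let U be an orthogonal matrix with U' Z U = [[0,0],[0,Z₂]] where Z₂ > 0. Writing U' Ā U = [[A₁₁,A₁₂],[A₂₁,A₂₂]], U' C̄ U = [[C₁₁,C₁₂],[C₂₁,C₂₂]], U' Q̄ U = [[Q₁₁,Q₁₂],[Q₁₂',Q₂₂]] in conforming blocks, then Q₁₁ = 0, Q₁₂ = 0, C₂₁ = 0, A₂₁ = 0, Q₂₂ ≥ 0, and A₂₂' Z₂ + Z₂ A₂₂ + C₂₂' Z₂ C₂₂ + Q₂₂ = 0. -/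
/-!
Conjugating the equation by `U` keeps it in Lyapunov form, with `Z` replaced by
`diag(0, Z₂)`. Its `(1,1)` block then reads `C₂₁ᵀ Z₂ C₂₁ + Q₁₁ = 0`, a sum of two positive
semidefinite matrices, so both vanish, and `C₂₁ = 0` because `Z₂ > 0`. A positive semidefinite
matrix with a zero diagonal block has zero off-diagonal blocks, so `Q₁₂ = 0`; the `(1,2)` block
then reduces to `A₂₁ᵀ Z₂ = 0`, whence `A₂₁ = 0` as `Z₂` is invertible. The `(2,2)` block is the
reduced Lyapunov equation.
-/

open Matrix

namespace Matrix

section PosSemidef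

open scoped ComplexOrder

variable {m n 𝕜 : Type*} [RCLike 𝕜]

open scoped MatrixOrder in
theorem PosSemidef.add_eq_zero_iff {A B : Matrix n n 𝕜} (hA : A.PosSemidef)
    (hB : B.PosSemidef) : A + B = 0 ↔ A = 0 ∧ B = 0 :=
  add_eq_zero_iff_of_nonneg hA.nonneg hB.nonneg

theorem PosDef.eq_zero_of_conjTranspose_mul_mul_same_eq_zero [Fintype m] [Fintype n]
    {A : Matrix n n 𝕜} (hA : A.PosDef) {B : Matrix n m 𝕜} (h : Bᴴ * A * B = 0) : B = 0 := by
  classical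
  refine ext_of_mulVec_single fun i => ?_
  rw [zero_mulVec]
  by_contra hx
  have hpos := hA.dotProduct_mulVec_pos hx
  have hzero : star (Pi.single i 1) ⬝ᵥ (Bᴴ * A * B) *ᵥ Pi.single i (1 : 𝕜) = 0 := by
    rw [h, zero_mulVec, dotProduct_zero]
  simp only [star_mulVec, dotProduct_mulVec, vecMul_vecMul] at hpos hzero
  exact hpos.ne' hzero

theorem PosSemidef.fromBlocks₁₂_eq_zero [Fintype m] [Fintype n] {A : Matrix m m 𝕜}
    {B : Matrix m n 𝕜} {D : Matrix n n 𝕜} (hM : (fromBlocks A B Bᴴ D).PosSemidef) (hA : A = 0) :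
    B = 0 := by
  classical
  subst hA
  refine conjTranspose_eq_zero.mp <| ext_of_mulVec_single fun i => funext fun j => ?_
  -- `(eᵢ, 0)` is isotropic for the block matrix, hence in its kernel.
  have hv : fromBlocks 0 B Bᴴ D *ᵥ Sum.elim (Pi.single i 1) 0 = 0 := by
    rw [← hM.dotProduct_mulVec_zero_iff]
    simp [dotProduct, Fintype.sum_sum_type]
  simpa [fromBlocks_mulVec] using congrFun hv (Sum.inr j)

end PosSemidef

section Lyapunov

variable {R k n : Type*} [CommSemiring R] [Fintype n]

def lyapunov (A C Q Z : Matrix n n R) : Matrix n n R :=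
  Aᵀ * Z + Z * A + Cᵀ * Z * C + Q

theorem transpose_mul_mul_same_mul [Fintype k] [DecidableEq n] {U : Matrix n k R}
    (hU : U * Uᵀ = 1) (X Y : Matrix n n R) : Uᵀ * (X * Y) * U = (Uᵀ * X * U) * (Uᵀ * Y * U) := by
  calc Uᵀ * (X * Y) * U = Uᵀ * X * ((U * Uᵀ) * Y * U) := by
        rw [hU, Matrix.one_mul, Matrix.mul_assoc, Matrix.mul_assoc, Matrix.mul_assoc]
    _ = (Uᵀ * X * U) * (Uᵀ * Y * U) := by simp only [Matrix.mul_assoc]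

theorem transpose_mul_mul_same_transpose [Fintype k] (U : Matrix n k R) (X : Matrix n n R) :
    Uᵀ * Xᵀ * U = (Uᵀ * X * U)ᵀ := by
  simp only [transpose_mul, transpose_transpose, Matrix.mul_assoc]

theorem transpose_mul_lyapunov_mul [Fintype k] [DecidableEq n] {U : Matrix n k R}
    (hU : U * Uᵀ = 1) (A C Q Z : Matrix n n R) :
    Uᵀ * lyapunov A C Q Z * U =
      lyapunov (Uᵀ * A * U) (Uᵀ * C * U) (Uᵀ * Q * U) (Uᵀ * Z * U) := by
  simp only [lyapunov, Matrix.mul_add, Matrix.add_mul]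
  rw [transpose_mul_mul_same_mul hU (Cᵀ * Z), transpose_mul_mul_same_mul hU Cᵀ,
    transpose_mul_mul_same_mul hU Aᵀ, transpose_mul_mul_same_mul hU Z,
    transpose_mul_mul_same_transpose, transpose_mul_mul_same_transpose]

theorem lyapunov_fromBlocks_zero₁₁ {p q : Type*} [Fintype p] [Fintype q]
    (A₁₁ C₁₁ Q₁₁ : Matrix p p R) (A₁₂ C₁₂ Q₁₂ : Matrix p q R) (A₂₁ C₂₁ Q₂₁ : Matrix q p R)
    (A₂₂ C₂₂ Q₂₂ Z₂ : Matrix q q R) :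
    lyapunov (fromBlocks A₁₁ A₁₂ A₂₁ A₂₂) (fromBlocks C₁₁ C₁₂ C₂₁ C₂₂)
        (fromBlocks Q₁₁ Q₁₂ Q₂₁ Q₂₂) (fromBlocks 0 0 0 Z₂) =
      fromBlocks (C₂₁ᵀ * Z₂ * C₂₁ + Q₁₁) (A₂₁ᵀ * Z₂ + C₂₁ᵀ * Z₂ * C₂₂ + Q₁₂)
        (Z₂ * A₂₁ + C₂₂ᵀ * Z₂ * C₂₁ + Q₂₁) (lyapunov A₂₂ C₂₂ Q₂₂ Z₂) := by
  simp only [lyapunov, fromBlocks_transpose, fromBlocks_multiply, fromBlocks_add,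
    Matrix.mul_zero, Matrix.zero_mul, add_zero, zero_add]

end Lyapunov

end Matrix

theorem stmt6_general {n p q : ℕ}
    (Abar Cbar Qbar Z : Matrix (Fin n) (Fin n) ℝ)
    (U : Matrix (Fin n) (Fin p ⊕ Fin q) ℝ)
    (Z₂ : Matrix (Fin q) (Fin q) ℝ)
    (A11 : Matrix (Fin p) (Fin p) ℝ) (A12 : Matrix (Fin p) (Fin q) ℝ)
    (A21 : Matrix (Fin q) (Fin p) ℝ) (A22 : Matrix (Fin q) (Fin q) ℝ)
    (C11 : Matrix (Fin p) (Fin p) ℝ) (C12 : Matrix (Fin p) (Fin q) ℝ)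
    (C21 : Matrix (Fin q) (Fin p) ℝ) (C22 : Matrix (Fin q) (Fin q) ℝ)
    (Q11 : Matrix (Fin p) (Fin p) ℝ) (Q12 : Matrix (Fin p) (Fin q) ℝ)
    (Q22 : Matrix (Fin q) (Fin q) ℝ)
    (hQbar : Qbar.PosSemidef)
    (hLyap : Abarᵀ * Z + Z * Abar + Cbarᵀ * Z * Cbar + Qbar = 0)
    (hU1 : U * Uᵀ = 1)
    (hZblk : Uᵀ * Z * U = Matrix.fromBlocks 0 0 0 Z₂) (hZ₂ : Z₂.PosDef)
    (hAblk : Uᵀ * Abar * U = Matrix.fromBlocks A11 A12 A21 A22)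
    (hCblk : Uᵀ * Cbar * U = Matrix.fromBlocks C11 C12 C21 C22)
    (hQblk : Uᵀ * Qbar * U = Matrix.fromBlocks Q11 Q12 Q12ᵀ Q22) :
    Q11 = 0 ∧ Q12 = 0 ∧ C21 = 0 ∧ A21 = 0 ∧ Q22.PosSemidef ∧
    A22ᵀ * Z₂ + Z₂ * A22 + C22ᵀ * Z₂ * C22 + Q22 = 0 := by
  have hblk := transpose_mul_lyapunov_mul hU1 Abar Cbar Qbar Z
  rw [lyapunov, hLyap, hAblk, hCblk, hQblk, hZblk, lyapunov_fromBlocks_zero₁₁,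
    Matrix.mul_zero, Matrix.zero_mul, ← fromBlocks_zero, fromBlocks_inj] at hblk
  obtain ⟨h₁₁, h₁₂, -, h₂₂⟩ := hblk
  have hQ : (fromBlocks Q11 Q12 Q12ᵀ Q22).PosSemidef := by
    simpa [← hQblk, conjTranspose_eq_transpose_of_trivial] using
      hQbar.conjTranspose_mul_mul_same U
  obtain ⟨hCZC, hQ11⟩ := ((hZ₂.posSemidef.conjTranspose_mul_mul_same C21).add_eq_zero_iff
    (hQ.submatrix Sum.inl)).mp h₁₁.symm
  have hC21 : C21 = 0 := hZ₂.eq_zero_of_conjTranspose_mul_mul_same_eq_zero hCZC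
  have hQ12 : Q12 = 0 := hQ.fromBlocks₁₂_eq_zero hQ11
  have hA21 : A21 = 0 := by
    have hA21Z : A21ᵀ * Z₂ = 0 := by simpa [hC21, hQ12] using h₁₂.symm
    rw [← transpose_eq_zero, ← mul_nonsing_inv_cancel_right Z₂ A21ᵀ
      ((isUnit_iff_isUnit_det Z₂).mp hZ₂.isUnit), hA21Z, Matrix.zero_mul]
  exact ⟨hQ11, hQ12, hC21, hA21, hQ.submatrix Sum.inr, h₂₂.symm⟩

theorem stmt6 {n p q : ℕ}
    (Abar Cbar Qbar Z : Matrix (Fin n) (Fin n) ℝ)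
    (U : Matrix (Fin n) (Fin p ⊕ Fin q) ℝ)
    (Z₂ : Matrix (Fin q) (Fin q) ℝ)
    (A11 : Matrix (Fin p) (Fin p) ℝ) (A12 : Matrix (Fin p) (Fin q) ℝ)
    (A21 : Matrix (Fin q) (Fin p) ℝ) (A22 : Matrix (Fin q) (Fin q) ℝ)
    (C11 : Matrix (Fin p) (Fin p) ℝ) (C12 : Matrix (Fin p) (Fin q) ℝ)
    (C21 : Matrix (Fin q) (Fin p) ℝ) (C22 : Matrix (Fin q) (Fin q) ℝ)
    (Q11 : Matrix (Fin p) (Fin p) ℝ) (Q12 : Matrix (Fin p) (Fin q) ℝ)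
    (Q22 : Matrix (Fin q) (Fin q) ℝ)
    (hZ : Z.PosSemidef) (hQbar : Qbar.PosSemidef)
    (hLyap : Abarᵀ * Z + Z * Abar + Cbarᵀ * Z * Cbar + Qbar = 0)
    (hU1 : U * Uᵀ = 1) (hU2 : Uᵀ * U = 1)
    (hZblk : Uᵀ * Z * U = Matrix.fromBlocks 0 0 0 Z₂) (hZ₂ : Z₂.PosDef)
    (hAblk : Uᵀ * Abar * U = Matrix.fromBlocks A11 A12 A21 A22)
    (hCblk : Uᵀ * Cbar * U = Matrix.fromBlocks C11 C12 C21 C22)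
    (hQblk : Uᵀ * Qbar * U = Matrix.fromBlocks Q11 Q12 Q12ᵀ Q22) :
    Q11 = 0 ∧ Q12 = 0 ∧ C21 = 0 ∧ A21 = 0 ∧ Q22.PosSemidef ∧
    A22ᵀ * Z₂ + Z₂ * A22 + C22ᵀ * Z₂ * C22 + Q22 = 0 :=
  stmt6_general Abar Cbar Qbar Z U Z₂ A11 A12 A21 A22 C11 C12 C21 C22 Q11 Q12 Q22 hQbar hLyap hU1
    hZblk hZ₂ hAblk hCblk hQblk
end

section
/- Let P̂ be a symmetric matrix such that the block matrix [[A'P̂ + P̂A + C'P̂C + Q, P̂B + C'P̂D],[B'P̂ + D'P̂C, R + D'P̂D]] is positive semidefinite. Define Q_P̂ = A'P̂ + P̂A + C'P̂C + Q, L_P̂ = P̂B + C'P̂D, R_P̂ = R + D'P̂D. If Z is any symmetric positive semidefinite solution of the singular algebraic Riccati equation A'Z + ZA + C'ZC + Q_P̂ - (ZB + C'ZD + L_P̂)(R_P̂ + D'ZD)†(B'Z + D'ZC + L_P̂') = 0 together with the regular condition (I - (R_P̂ + D'ZD)(R_P̂ + D'ZD)†)(B'Z + D'ZC + L_P̂')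 = 0, then P = Z + P̂ satisfies the generalized algebraic Riccati equation A'P + PA + C'PC + Q - (PB + C'PD)(R + D'PD)†(B'P + D'PC) = 0, with (R + D'PD)(R + D'PD)†(B'P + D'PC) = B'P + D'PC and R + D'PD ≥ 0. -/
/-!
With `P = Z + P̂` the coefficients of the Riccati equation for `P` are exactly the shifted
coefficients `Q_P̂`, `L_P̂`, `R_P̂` of the equation for `Z`, so by uniqueness of the Moore–Penrose
inverse both equations, and both regularity conditions, are literally the same. Moreover
`R + D'PD = R_P̂ + D'ZD` is positive semidefinite because `R_P̂` is a diagonal block of the LMI.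
-/

open Matrix

/-- Any two pseudoinverses `B`, `C` of `A` both equal `B * A * C`. -/
theorem IsMoorePenrose.unique_s9 {k l : ℕ} {A : Matrix (Fin k) (Fin l) ℝ}
    {B C : Matrix (Fin l) (Fin k) ℝ} (hB : IsMoorePenrose A B) (hC : IsMoorePenrose A C) :
    B = C := by
  obtain ⟨hABA, hBAB, hAB, hBA⟩ := hB
  obtain ⟨hACA, hCAC, hAC, hCA⟩ := hC
  have hB_eq : B = B * A * C :=
    calc B = B * (A * B)ᵀ := by rw [hAB, ← Matrix.mul_assoc, hBAB]
      _ = B * ((A * C) * (A * B))ᵀ := by rw [← Matrix.mul_assoc (A * C), hACA]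
      _ = B * ((A * B) * (A * C)) := by rw [transpose_mul, hAB, hAC]
      _ = B * A * C := by simp only [← Matrix.mul_assoc, hBAB]
  have hC_eq : C = B * A * C :=
    calc C = (C * A)ᵀ * C := by rw [hCA, hCAC]
      _ = ((C * A) * (B * A))ᵀ * C := by
        rw [Matrix.mul_assoc C A (B * A), ← Matrix.mul_assoc A B A, hABA]
      _ = (B * A) * (C * A) * C := by rw [transpose_mul, hBA, hCA]
      _ = B * A * C := by rw [Matrix.mul_assoc (B * A), hCAC]
  rw [hB_eq, ← hC_eq]

theorem Matrix.PosSemidef.toBlocks₂₂ {m n R : Type*} [Ring R] [PartialOrder R] [StarRing R]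
    {M : Matrix (m ⊕ n) (m ⊕ n) R} (hM : M.PosSemidef) : M.toBlocks₂₂.PosSemidef :=
  hM.submatrix Sum.inr

section RiccatiShift

variable {ι κ α : Type*} [Fintype ι] [CommRing α]
  (A C Q Z P : Matrix ι ι α) (B D : Matrix ι κ α) (R : Matrix κ κ α)

theorem riccati_constTerm_add :
    Aᵀ * (Z + P) + (Z + P) * A + Cᵀ * (Z + P) * C + Q
      = Aᵀ * Z + Z * A + Cᵀ * Z * C + (Aᵀ * P + P * A + Cᵀ * P * C + Q) := by
  simp only [Matrix.mul_add, Matrix.add_mul]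
  abel

theorem riccati_crossTerm_add :
    (Z + P) * B + Cᵀ * (Z + P) * D = Z * B + Cᵀ * Z * D + (P * B + Cᵀ * P * D) := by
  simp only [Matrix.mul_add, Matrix.add_mul]
  abel

variable {P} in
theorem riccati_crossTerm_transpose_add (hP : P.IsSymm) :
    Bᵀ * (Z + P) + Dᵀ * (Z + P) * C = Bᵀ * Z + Dᵀ * Z * C + (P * B + Cᵀ * P * D)ᵀ := by
  simp only [Matrix.mul_add, Matrix.add_mul, transpose_add, transpose_mul, hP.eq,
    transpose_transpose, Matrix.mul_assoc]
  abel

theorem riccati_weightTerm_add :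
    R + Dᵀ * (Z + P) * D = R + Dᵀ * P * D + Dᵀ * Z * D := by
  simp only [Matrix.mul_add, Matrix.add_mul]
  abel

end RiccatiShift

theorem stmt9_general {n m : ℕ}
    (A C Q Phat Z : Matrix (Fin n) (Fin n) ℝ)
    (B D : Matrix (Fin n) (Fin m) ℝ) (R : Matrix (Fin m) (Fin m) ℝ)
    (hPhat : Phat.IsSymm)
    (hLMI : (Matrix.fromBlocks
        (Aᵀ * Phat + Phat * A + Cᵀ * Phat * C + Q) (Phat * B + Cᵀ * Phat * D)
        (Bᵀ * Phat + Dᵀ * Phat * C) (R + Dᵀ * Phat * D)).PosSemidef)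
    (hZ : Z.PosSemidef)
    -- notation: Q_P̂, L_P̂, R_P̂
    (QP LP RP : _)
    (hQP : QP = Aᵀ * Phat + Phat * A + Cᵀ * Phat * C + Q)
    (hLP : LP = Phat * B + Cᵀ * Phat * D)
    (hRP : RP = R + Dᵀ * Phat * D)
    (W1 : Matrix (Fin m) (Fin m) ℝ)
    (hW1 : IsMoorePenrose (RP + Dᵀ * Z * D) W1)
    (hSARE : Aᵀ * Z + Z * A + Cᵀ * Z * C + QP
        - (Z * B + Cᵀ * Z * D + LP) * W1 * (Bᵀ * Z + Dᵀ * Z * C + LPᵀ) = 0)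
    (hregZ : (1 - (RP + Dᵀ * Z * D) * W1) * (Bᵀ * Z + Dᵀ * Z * C + LPᵀ) = 0)
    (P : Matrix (Fin n) (Fin n) ℝ) (hP : P = Z + Phat)
    (W2 : Matrix (Fin m) (Fin m) ℝ)
    (hW2 : IsMoorePenrose (R + Dᵀ * P * D) W2) :
    Aᵀ * P + P * A + Cᵀ * P * C + Q
        - (P * B + Cᵀ * P * D) * W2 * (Bᵀ * P + Dᵀ * P * C) = 0 ∧
    (R + Dᵀ * P * D) * W2 * (Bᵀ * P + Dᵀ * P * C) = Bᵀ * P + Dᵀ * P * C ∧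
    (R + Dᵀ * P * D).PosSemidef := by
  subst hQP hLP hRP hP
  -- explicit arguments, since the pattern also matches `… + Cᵀ * (Z + Phat) * C`
  rw [riccati_weightTerm_add Z Phat D R] at hW2 ⊢
  obtain rfl : W2 = W1 := hW2.unique_s9 hW1
  rw [riccati_crossTerm_transpose_add _ _ _ _ hPhat]
  refine ⟨?_, ?_, ?_⟩
  · rwa [riccati_constTerm_add, riccati_crossTerm_add]
  · rwa [Matrix.sub_mul, Matrix.one_mul, sub_eq_zero, eq_comm] at hregZ
  · have hRP : (R + Dᵀ * Phat * D).PosSemidef := by simpa using hLMI.toBlocks₂₂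
    simpa using hRP.add (hZ.conjTranspose_mul_mul_same D)

theorem stmt9 {n m : ℕ}
    (A C Q Phat Z : Matrix (Fin n) (Fin n) ℝ)
    (B D : Matrix (Fin n) (Fin m) ℝ) (R : Matrix (Fin m) (Fin m) ℝ)
    (hQ : Q.IsSymm) (hR : R.IsSymm) (hPhat : Phat.IsSymm)
    (hLMI : (Matrix.fromBlocks
        (Aᵀ * Phat + Phat * A + Cᵀ * Phat * C + Q) (Phat * B + Cᵀ * Phat * D)
        (Bᵀ * Phat + Dᵀ * Phat * C) (R + Dᵀ * Phat * D)).PosSemidef)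
    (hZ : Z.PosSemidef)
    -- notation: Q_P̂, L_P̂, R_P̂
    (QP LP RP : _)
    (hQP : QP = Aᵀ * Phat + Phat * A + Cᵀ * Phat * C + Q)
    (hLP : LP = Phat * B + Cᵀ * Phat * D)
    (hRP : RP = R + Dᵀ * Phat * D)
    (W1 : Matrix (Fin m) (Fin m) ℝ)
    (hW1 : IsMoorePenrose (RP + Dᵀ * Z * D) W1)
    (hSARE : Aᵀ * Z + Z * A + Cᵀ * Z * C + QP
        - (Z * B + Cᵀ * Z * D + LP) * W1 * (Bᵀ * Z + Dᵀ * Z * C + LPᵀ) = 0)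
    (hregZ : (1 - (RP + Dᵀ * Z * D) * W1) * (Bᵀ * Z + Dᵀ * Z * C + LPᵀ) = 0)
    (P : Matrix (Fin n) (Fin n) ℝ) (hP : P = Z + Phat)
    (W2 : Matrix (Fin m) (Fin m) ℝ)
    (hW2 : IsMoorePenrose (R + Dᵀ * P * D) W2) :
    Aᵀ * P + P * A + Cᵀ * P * C + Q
        - (P * B + Cᵀ * P * D) * W2 * (Bᵀ * P + Dᵀ * P * C) = 0 ∧
    (R + Dᵀ * P * D) * W2 * (Bᵀ * P + Dᵀ * P * C) = Bᵀ * P + Dᵀ * P * C ∧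
    (R + Dᵀ * P * D).PosSemidef :=
  stmt9_general A C Q Phat Z B D R hPhat hLMI hZ QP LP RP hQP hLP hRP W1 hW1 hSARE hregZ P hP W2 hW2
end

section
/- Let F: [0,T] → symmetric n×n matrices satisfy the linear matrix differential equation -Ḟ(t) = Q + A'F(t) + F(t)A + C'F(t)C with F(T) = 0, where Q is positive semidefinite. Then F(t) is positive semidefinite for all t ∈ [0,T]. -/
/-!
For `ε > 0` the shifted matrix `P t = F t + ε e^{L (T - t)} • 1` is positive definite at `t = T`.
Going backwards from `T`, at the first time it fails to be, some unit vector `x` is a null vector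
of `P t`, so `F t x = -δ x` with `δ = ε e^{L (T - t)}`, and the equation gives
`d/dt xᵀ P x ≤ δ (2 xᵀ A x + |C x|² - L |x|²) < 0` as soon as `L` bounds `2 xᵀ A x + |C x|²` on
the unit sphere. Then `xᵀ P x < 0` just after that time, a contradiction. Letting `ε → 0` shows
that `F t` is positive semidefinite.
-/

open Matrix Set Filter Topology

theorem IsCompact.exists_forall_lt_mul {X : Type*} [TopologicalSpace X] {K : Set X}
    (hK : IsCompact K) {f g : X → ℝ} (hf : ContinuousOn f K) (hg : ContinuousOn g K)
    (hg_pos : ∀ x ∈ K, 0 < g x) : ∃ L, ∀ x ∈ K, f x < L * g x := by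
  obtain ⟨M, hM⟩ := hK.bddAbove_image (hf.div hg fun x hx => (hg_pos x hx).ne')
  refine ⟨M + 1, fun x hx => ?_⟩
  have := (div_le_iff₀ (hg_pos x hx)).1 (hM ⟨x, hx, rfl⟩)
  nlinarith [hg_pos x hx]

theorem HasDerivAt.eventually_nhdsGT_lt {f : ℝ → ℝ} {f' t : ℝ} (hf : HasDerivAt f f' t)
    (hf' : f' < 0) : ∀ᶠ s in 𝓝[>] t, f s < f t :=
  (hf.hasDerivWithinAt.limsup_slope_le' (lt_irrefl t) hf').mp <|
    eventually_nhdsWithin_of_forall fun _ hs h => (slope_neg_iff_of_le (le_of_lt hs)).1 h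

theorem forall_pos_of_first_touch {X : Type*} [TopologicalSpace X] [T2Space X] {S : Set X}
    (hS : IsCompact S) {q : ℝ → X → ℝ} {a b : ℝ}
    (hq : ContinuousOn (fun p : ℝ × X => q p.1 p.2) (Icc a b ×ˢ S))
    (hb : ∀ x ∈ S, 0 < q b x)
    (htouch : ∀ t ∈ Ico a b, ∀ x ∈ S, (∀ y ∈ S, 0 ≤ q t y) → q t x = 0 →
      ∃ᶠ s in 𝓝[>] t, q s x ≤ 0) :
    ∀ t ∈ Icc a b, ∀ x ∈ S, 0 < q t x := by
  by_contra! hbad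
  obtain ⟨t₀, ht₀, x₀, hx₀, hq₀⟩ := hbad
  set K := Icc a b ×ˢ S ∩ (fun p : ℝ × X => q p.1 p.2) ⁻¹' Iic 0
  have hK : IsCompact K := (isCompact_Icc.prod hS).of_isClosed_subset
    (hq.preimage_isClosed_of_isClosed (isClosed_Icc.prod hS.isClosed) isClosed_Iic)
    inter_subset_left
  -- `t` is the last time at which `q` is nonpositive somewhere on `S`
  obtain ⟨⟨t, x⟩, ⟨⟨ht, hx⟩, hqx⟩, hmax⟩ :=
    hK.exists_isMaxOn ⟨(t₀, x₀), ⟨ht₀, hx₀⟩, hq₀⟩ continuous_fst.continuousOn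
  have htb : t < b := ht.2.lt_of_ne fun h => (hb x hx).not_ge (h ▸ hqx)
  have hIoc : Ioc t b ∈ 𝓝[>] t := Ioc_mem_nhdsGT htb
  have hlater : ∀ s ∈ Ioc t b, ∀ y ∈ S, 0 < q s y := fun s hs y hy => by
    by_contra! h
    exact hs.1.not_ge (hmax (a := (s, y)) ⟨⟨⟨ht.1.trans hs.1.le, hs.2⟩, hy⟩, h⟩)
  have hnonneg : ∀ y ∈ S, 0 ≤ q t y := fun y hy => by
    have hcont : ContinuousWithinAt (fun s => q s y) (Ioi t) t :=
      ((hq.comp (continuousOn_id.prodMk continuousOn_const) fun s hs => ⟨hs, hy⟩) t ht)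
        |>.mono_of_mem_nhdsWithin
          (mem_of_superset hIoc (Ioc_subset_Icc_self.trans (Icc_subset_Icc_left ht.1)))
    exact ge_of_tendsto hcont (eventually_of_mem hIoc fun s hs => (hlater s hs y hy).le)
  obtain ⟨s, hs, hsx⟩ := ((htouch t ⟨ht.1, htb⟩ x hx hnonneg
    ((hqx : q t x ≤ 0).antisymm (hnonneg x hx))).and_eventually hIoc).exists
  exact (hlater s hsx x hx).not_ge hs

section

variable {ι : Type*} [Fintype ι]

theorem hasDerivAt_dotProduct_mulVec {M : ℝ → Matrix ι ι ℝ} {M' : Matrix ι ι ℝ} {t : ℝ}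
    (hM : ∀ i j, HasDerivAt (fun s => M s i j) (M' i j) t) (x y : ι → ℝ) :
    HasDerivAt (fun s => x ⬝ᵥ M s *ᵥ y) (x ⬝ᵥ M' *ᵥ y) t := by
  simp only [dotProduct, mulVec, Finset.mul_sum]
  exact HasDerivAt.fun_sum fun i _ => HasDerivAt.fun_sum fun j _ =>
    ((hM i j).mul_const (y j)).const_mul (x i)

theorem dotProduct_self_pos_of_mem_sphere {x : ι → ℝ} (hx : x ∈ Metric.sphere 0 1) :
    0 < x ⬝ᵥ x :=
  (dotProduct_star_self_nonneg x).lt_of_ne'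
    (dotProduct_self_eq_zero.not.2 (ne_zero_of_mem_unit_sphere ⟨x, hx⟩))

theorem posSemidef_of_forall_sphere {M : Matrix ι ι ℝ} (hM : M.IsSymm)
    (h : ∀ x ∈ Metric.sphere (0 : ι → ℝ) 1, 0 ≤ x ⬝ᵥ M *ᵥ x) : M.PosSemidef := by
  refine posSemidef_iff_dotProduct_mulVec.2 ⟨isHermitian_iff_isSymm.2 hM, fun x => ?_⟩
  rcases eq_or_ne x 0 with rfl | hx
  · simp
  · have hn : 0 < ‖x‖⁻¹ := by positivity
    have := h (‖x‖⁻¹ • x) (by simp [norm_smul, hx])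
    rw [mulVec_smul, smul_dotProduct, dotProduct_smul, smul_eq_mul, smul_eq_mul] at this
    simpa using (mul_nonneg_iff_of_pos_left hn).1 ((mul_nonneg_iff_of_pos_left hn).1 this)

variable [DecidableEq ι]

theorem posSemidef_of_forall_add_smul_one {M : Matrix ι ι ℝ} (hM : M.IsSymm)
    (h : ∀ ε : ℝ, 0 < ε → ∀ x ∈ Metric.sphere (0 : ι → ℝ) 1, 0 ≤ x ⬝ᵥ (M + ε • 1) *ᵥ x) :
    M.PosSemidef := by
  refine posSemidef_of_forall_sphere hM fun x hx => ?_
  have hlim : Tendsto (fun ε : ℝ => x ⬝ᵥ (M + ε • 1) *ᵥ x) (𝓝[>] 0) (𝓝 (x ⬝ᵥ M *ᵥ x)) := by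
    have : Continuous fun ε : ℝ => x ⬝ᵥ (M + ε • 1) *ᵥ x := by fun_prop
    simpa using (this.tendsto 0).mono_left nhdsWithin_le_nhds
  exact ge_of_tendsto hlim (eventually_nhdsWithin_of_forall fun ε hε => h ε hε x hx)

theorem le_dotProduct_mulVec_of_shift_posSemidef {F A C : Matrix ι ι ℝ} {δ : ℝ} {x : ι → ℝ}
    (hF : F.IsSymm) (hP : (F + δ • 1).PosSemidef) (hx : (F + δ • 1) *ᵥ x = 0) :
    -δ * (2 * (x ⬝ᵥ A *ᵥ x) + (C *ᵥ x) ⬝ᵥ (C *ᵥ x)) ≤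
      x ⬝ᵥ (Aᵀ * F + F * A + Cᵀ * F * C) *ᵥ x := by
  have hFx : F *ᵥ x = -δ • x := by
    rw [add_mulVec, smul_mulVec, one_mulVec] at hx
    exact eq_neg_of_add_eq_zero_left hx ▸ (neg_smul δ x).symm
  have hAF : x ⬝ᵥ (Aᵀ * F) *ᵥ x = -δ * (x ⬝ᵥ A *ᵥ x) := by
    rw [← mulVec_mulVec, dotProduct_mulVec, vecMul_transpose, hFx, dotProduct_smul,
      smul_eq_mul, dotProduct_comm]
  have hFA : x ⬝ᵥ (F * A) *ᵥ x = -δ * (x ⬝ᵥ A *ᵥ x) := by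
    have hxF : x ᵥ* F = F *ᵥ x := by rw [← vecMul_transpose, hF.eq]
    rw [← mulVec_mulVec, dotProduct_mulVec, hxF, hFx, smul_dotProduct, smul_eq_mul]
  have hCFC : -δ * ((C *ᵥ x) ⬝ᵥ (C *ᵥ x)) ≤ x ⬝ᵥ (Cᵀ * F * C) *ᵥ x := by
    have := hP.dotProduct_mulVec_nonneg (C *ᵥ x)
    rw [← mulVec_mulVec, ← mulVec_mulVec, dotProduct_mulVec x Cᵀ, vecMul_transpose]
    simp only [star_trivial, add_mulVec, smul_mulVec, one_mulVec, dotProduct_add,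
      dotProduct_smul, smul_eq_mul] at this
    linarith
  rw [add_mulVec, add_mulVec, dotProduct_add, dotProduct_add, hAF, hFA]
  linarith

variable {A C Q : Matrix ι ι ℝ} {F : ℝ → Matrix ι ι ℝ}

theorem eventually_dotProduct_shift_mulVec_neg {δ : ℝ → ℝ} {L t : ℝ} {x : ι → ℝ}
    (hQ : Q.PosSemidef) (hFt : (F t).IsSymm)
    (hode : ∀ i j, HasDerivAt (fun s => F s i j)
      (-(Q + Aᵀ * F t + F t * A + Cᵀ * F t * C) i j) t)
    (hδ : HasDerivAt δ (-L * δ t) t) (hδ_pos : 0 < δ t)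
    (hL : 2 * (x ⬝ᵥ A *ᵥ x) + (C *ᵥ x) ⬝ᵥ (C *ᵥ x) < L * (x ⬝ᵥ x))
    (hP : (F t + δ t • 1).PosSemidef) (hx : x ⬝ᵥ (F t + δ t • 1) *ᵥ x = 0) :
    ∀ᶠ s in 𝓝[>] t, x ⬝ᵥ (F s + δ s • 1) *ᵥ x < 0 := by
  have hderiv := hasDerivAt_dotProduct_mulVec (M := fun s => F s + δ s • 1) (fun i j =>
    (hode i j).add (hδ.mul_const ((1 : Matrix ι ι ℝ) i j))) x x
  have hsplit : x ⬝ᵥ (-(Q + Aᵀ * F t + F t * A + Cᵀ * F t * C) + (-L * δ t) • 1) *ᵥ x =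
      -(x ⬝ᵥ Q *ᵥ x) - x ⬝ᵥ (Aᵀ * F t + F t * A + Cᵀ * F t * C) *ᵥ x
        - δ t * (L * (x ⬝ᵥ x)) := by
    simp only [add_mulVec, neg_mulVec, smul_mulVec, one_mulVec, dotProduct_add,
      dotProduct_neg, dotProduct_smul, smul_eq_mul]
    ring
  have hdrift := le_dotProduct_mulVec_of_shift_posSemidef (A := A) (C := C) hFt hP
    ((hP.dotProduct_mulVec_zero_iff x).1 (by simpa using hx))
  have hQx : 0 ≤ x ⬝ᵥ Q *ᵥ x := by simpa using hQ.dotProduct_mulVec_nonneg x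
  have hneg : x ⬝ᵥ (-(Q + Aᵀ * F t + F t * A + Cᵀ * F t * C) + (-L * δ t) • 1) *ᵥ x < 0 := by
    nlinarith [mul_lt_mul_of_pos_left hL hδ_pos]
  exact (hderiv.eventually_nhdsGT_lt hneg).mono fun _ hs => hs.trans_eq hx

theorem dotProduct_add_exp_smul_one_mulVec_pos {T L ε : ℝ} (hQ : Q.PosSemidef)
    (hFsymm : ∀ t ∈ Icc 0 T, (F t).IsSymm)
    (hode : ∀ t ∈ Icc 0 T, ∀ i j, HasDerivAt (fun s => F s i j)
      (-(Q + Aᵀ * F t + F t * A + Cᵀ * F t * C) i j) t)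
    (hterm : F T = 0)
    (hL : ∀ x ∈ Metric.sphere (0 : ι → ℝ) 1,
      2 * (x ⬝ᵥ A *ᵥ x) + (C *ᵥ x) ⬝ᵥ (C *ᵥ x) < L * (x ⬝ᵥ x))
    (hε : 0 < ε) :
    ∀ t ∈ Icc 0 T, ∀ x ∈ Metric.sphere (0 : ι → ℝ) 1,
      0 < x ⬝ᵥ (F t + (ε * Real.exp (L * (T - t))) • 1) *ᵥ x := by
  apply forall_pos_of_first_touch
    (q := fun t x => x ⬝ᵥ (F t + (ε * Real.exp (L * (T - t))) • 1) *ᵥ x) (isCompact_sphere 0 1)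
  · have hF : ContinuousOn F (Icc 0 T) := continuousOn_pi.2 fun i => continuousOn_pi.2
      fun j t ht => (hode t ht i j).continuousAt.continuousWithinAt
    have hP : ContinuousOn (fun t => F t + (ε * Real.exp (L * (T - t))) • 1) (Icc 0 T) :=
      hF.add (by fun_prop)
    have hquad : Continuous fun p : Matrix ι ι ℝ × (ι → ℝ) => p.2 ⬝ᵥ p.1 *ᵥ p.2 := by fun_prop
    exact hquad.comp_continuousOn
      ((hP.comp continuousOn_fst fun p hp => hp.1).prodMk continuousOn_snd)
  · intro x hx
    simpa [hterm, add_mulVec, smul_mulVec] using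
      mul_pos hε (dotProduct_self_pos_of_mem_sphere hx)
  · intro t ht x hx hnonneg hzero
    have ht' : t ∈ Icc 0 T := Ico_subset_Icc_self ht
    have hδ : HasDerivAt (fun s => ε * Real.exp (L * (T - s)))
        (-L * (ε * Real.exp (L * (T - t)))) t :=
      ((((hasDerivAt_id' t).const_sub T).const_mul L).exp.const_mul ε).congr_deriv (by ring)
    have hP := posSemidef_of_forall_sphere (by simp [IsSymm, (hFsymm t ht').eq]) hnonneg
    exact (eventually_dotProduct_shift_mulVec_neg hQ (hFsymm t ht') (hode t ht') hδ
      (by positivity) (hL x hx) hP hzero).frequently.mono fun _ => le_of_lt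

end

theorem stmt11_general {n : ℕ} (T : ℝ)
    (A C Q : Matrix (Fin n) (Fin n) ℝ) (hQ : Q.PosSemidef)
    (F : ℝ → Matrix (Fin n) (Fin n) ℝ)
    (hFsymm : ∀ t ∈ Set.Icc 0 T, (F t).IsSymm)
    (hode : ∀ t ∈ Set.Icc 0 T, ∀ i j,
      HasDerivAt (fun s => F s i j)
        (-(Q + Aᵀ * F t + F t * A + Cᵀ * F t * C) i j) t)
    (hterm : F T = 0) :
    ∀ t ∈ Set.Icc 0 T, (F t).PosSemidef := by
  obtain ⟨L, hL⟩ := (isCompact_sphere (0 : Fin n → ℝ) 1).exists_forall_lt_mul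
    (f := fun x => 2 * (x ⬝ᵥ A *ᵥ x) + (C *ᵥ x) ⬝ᵥ (C *ᵥ x)) (g := fun x => x ⬝ᵥ x)
    (by fun_prop) (by fun_prop) fun _ => dotProduct_self_pos_of_mem_sphere
  intro t ht
  refine posSemidef_of_forall_add_smul_one (hFsymm t ht) fun ε hε x hx => ?_
  have hpos := dotProduct_add_exp_smul_one_mulVec_pos hQ hFsymm hode hterm hL
    (div_pos hε (Real.exp_pos (L * (T - t)))) t ht x hx
  rw [div_mul_cancel₀ _ (Real.exp_pos _).ne'] at hpos
  exact hpos.le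

theorem stmt11 {n : ℕ} (T : ℝ) (hT : 0 ≤ T)
    (A C Q : Matrix (Fin n) (Fin n) ℝ) (hQsymm : Q.IsSymm) (hQ : Q.PosSemidef)
    (F : ℝ → Matrix (Fin n) (Fin n) ℝ)
    (hFsymm : ∀ t ∈ Set.Icc 0 T, (F t).IsSymm)
    (hode : ∀ t ∈ Set.Icc 0 T, ∀ i j,
      HasDerivAt (fun s => F s i j)
        (-(Q + Aᵀ * F t + F t * A + Cᵀ * F t * C) i j) t)
    (hterm : F T = 0) :
    ∀ t ∈ Set.Icc 0 T, (F t).PosSemidef :=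
  stmt11_general T A C Q hQ F hFsymm hode hterm
end
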